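/- arXiv:2004.01744 — 2 statements merged into one kernel-verified Lean document; each statement's English description precedes it below -/
import Mathlib

section
/- The function c_k(τ) = τ^{k/2−1} / ((2π)^{k/2} · J_{k/2−1}(τ)), where J_q is the modified Bessel function of the first kind of order q, is strictly decreasing in τ > 0; indeed its derivative satisfies c_k'(τ) = −(J_{k/2}(τ)/J_{k/2−1}(τ)) · c_k(τ) < 0. -/
/-!
Write `I_q(τ) = (τ/2)^q F_q((τ/2)²)` with the entire series `F_q(x) = ∑ xᵐ / (m! Γ(m+q+1))`.
Termwise differentiation gives `F_q' = F_{q+1}` (the derivative series is the one for `q + 1`,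
shifted by one index), hence the recurrence `I_q' = I_{q+1} + (q/τ) I_q`. For `q = k/2 - 1 > -1`
every term is positive, and the quotient rule turns the recurrence into
`(τ^q / I_q)' = -(I_{q+1} / I_q) · τ^q / I_q < 0`.
-/

open Real Set

/-- The modified Bessel function of the first kind of (real) order `q`,
`I_q(τ) = ∑_{m} (τ/2)^{2m+q} / (m! Γ(m+q+1))`. -/
noncomputable def besselI (q τ : ℝ) : ℝ :=
  ∑' m : ℕ, (τ / 2) ^ (2 * m) * (τ / 2) ^ q /
    ((Nat.factorial m : ℝ) * Real.Gamma ((m : ℝ) + q + 1))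

/-- The normalizing constant of the Von Mises–Fisher distribution,
`c_k(τ) = τ^{k/2−1} / ((2π)^{k/2} I_{k/2−1}(τ))`. -/
noncomputable def vmfConst (k : ℕ) (τ : ℝ) : ℝ :=
  τ ^ ((k : ℝ) / 2 - 1) / ((2 * π) ^ ((k : ℝ) / 2) * besselI ((k : ℝ) / 2 - 1) τ)

open Filter
open scoped Nat

namespace Real

theorem one_le_Gamma_of_two_le {x : ℝ} (hx : 2 ≤ x) : 1 ≤ Gamma x :=
  Gamma_two ▸ Gamma_strictMonoOn_Ici.monotoneOn (mem_Ici.2 le_rfl) hx hx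

theorem Gamma_natCast_add_add_one_pos {q : ℝ} (hq : -1 < q) (m : ℕ) : 0 < Gamma (m + q + 1) :=
  Gamma_pos_of_pos (by linarith [m.cast_nonneg (α := ℝ)])

end Real

/-- The regularized hypergeometric function `₀F̃₁(; q + 1; x)`. -/
noncomputable def besselISeries (q x : ℝ) : ℝ :=
  ∑' m : ℕ, x ^ m / (m ! * Gamma (m + q + 1))

section besselISeries

variable {q : ℝ}

lemma summable_besselISeries (hq : -1 < q) (x : ℝ) :
    Summable fun m : ℕ ↦ x ^ m / (m ! * Gamma (m + q + 1)) := by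
  refine .of_norm_bounded_eventually_nat (Real.summable_pow_div_factorial |x|) ?_
  filter_upwards [eventually_ge_atTop 2] with m hm
  have hm' : (2 : ℝ) ≤ m := by exact_mod_cast hm
  have hΓ : 1 ≤ Gamma (m + q + 1) := one_le_Gamma_of_two_le (by linarith)
  rw [norm_div, norm_pow, Real.norm_eq_abs, norm_mul, Real.norm_natCast,
    Real.norm_of_nonneg (by linarith)]
  gcongr
  exact le_mul_of_one_le_right (by positivity) hΓ

lemma succ_mul_pow_div_factorial_mul_Gamma (q y : ℝ) (n : ℕ) :
    ((n + 1 : ℕ) : ℝ) * y ^ n / ((n + 1)! * Gamma ((n + 1 : ℕ) + q + 1)) =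
      y ^ n / (n ! * Gamma (n + (q + 1) + 1)) := by
  rw [Nat.factorial_succ, Nat.cast_mul, mul_assoc, mul_div_mul_left _ _ (by positivity)]
  push_cast
  ring_nf

lemma hasDerivAt_besselISeries (hq : -1 < q) (x : ℝ) :
    HasDerivAt (besselISeries q) (besselISeries (q + 1) x) x := by
  set R := |x| + 1
  have hmem : x ∈ Ioo (-R) R := abs_lt.1 (by linarith)
  have hderiv_summable (y : ℝ) :
      Summable fun m : ℕ ↦ m * y ^ (m - 1) / (m ! * Gamma (m + q + 1)) := by
    refine (summable_nat_add_iff 1).1 ?_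
    simpa only [add_tsub_cancel_right, succ_mul_pow_div_factorial_mul_Gamma]
      using summable_besselISeries (by linarith) y
  have key := hasDerivAt_tsum_of_isPreconnected (hderiv_summable R) isOpen_Ioo isPreconnected_Ioo
    (fun m y _ ↦ ((hasDerivAt_pow m y).div_const _))
    (fun m y hy ↦ ?_) hmem (summable_besselISeries hq x) hmem
  · rw [(hderiv_summable x).tsum_eq_zero_add, CharP.cast_eq_zero, zero_mul, zero_div,
      zero_add] at key
    simp only [add_tsub_cancel_right, succ_mul_pow_div_factorial_mul_Gamma] at key
    exact key
  · have := Gamma_natCast_add_add_one_pos hq m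
    rw [norm_div, norm_mul, norm_pow, Real.norm_natCast, Real.norm_eq_abs,
      Real.norm_of_nonneg (by positivity)]
    gcongr
    exact (abs_lt.2 hy).le

lemma besselISeries_pos (hq : -1 < q) {x : ℝ} (hx : 0 ≤ x) : 0 < besselISeries q x := by
  have hΓ := Gamma_natCast_add_add_one_pos hq
  refine (summable_besselISeries hq x).tsum_pos (fun m ↦ by have := hΓ m; positivity) 0 ?_
  simpa using hΓ 0

end besselISeries

lemma besselI_eq_rpow_mul_besselISeries (q τ : ℝ) :
    besselI q τ = (τ / 2) ^ q * besselISeries q ((τ / 2) ^ 2) := by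
  rw [besselI, besselISeries, ← tsum_mul_left]
  congr 1 with m
  rw [← pow_mul]
  ring

section besselI

variable {q τ : ℝ}

lemma besselI_pos (hq : -1 < q) (hτ : 0 < τ) : 0 < besselI q τ := by
  rw [besselI_eq_rpow_mul_besselISeries]
  exact mul_pos (by positivity) (besselISeries_pos hq (sq_nonneg _))

lemma hasDerivAt_besselI (hq : -1 < q) (hτ : 0 < τ) :
    HasDerivAt (besselI q) (besselI (q + 1) τ + q / τ * besselI q τ) τ := by
  have hhalf : HasDerivAt (· / 2) (1 / 2 : ℝ) τ := (hasDerivAt_id τ).div_const 2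
  have hprod := (hhalf.rpow_const (p := q) (Or.inl (by positivity))).mul
    ((hasDerivAt_besselISeries hq _).comp τ (hhalf.pow 2))
  rw [besselI_eq_rpow_mul_besselISeries (q + 1) τ, besselI_eq_rpow_mul_besselISeries q τ,
    funext (besselI_eq_rpow_mul_besselISeries q)]
  refine hprod.congr_deriv ?_
  simp only [Function.comp_apply, Pi.pow_apply]
  rw [rpow_add_one (by positivity), rpow_sub_one (by positivity)]
  field_simp
  ring

lemma hasDerivAt_rpow_div_besselI (hq : -1 < q) (hτ : 0 < τ) :
    HasDerivAt (fun t ↦ t ^ q / besselI q t)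
      (-(besselI (q + 1) τ / besselI q τ) * (τ ^ q / besselI q τ)) τ := by
  have hI := besselI_pos hq hτ
  refine ((hasDerivAt_rpow_const (Or.inl hτ.ne')).div (hasDerivAt_besselI hq hτ)
    hI.ne').congr_deriv ?_
  rw [rpow_sub_one hτ.ne']
  field_simp
  ring

end besselI

/-- The function `c_k` is strictly decreasing on `(0, ∞)`; indeed its
derivative satisfies `c_k'(τ) = −(I_{k/2}(τ)/I_{k/2−1}(τ)) · c_k(τ) < 0`. -/
theorem vmfConst_strictAnti (k : ℕ) (hk : 1 ≤ k) :
    (∀ τ ∈ Ioi (0 : ℝ),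
      HasDerivAt (vmfConst k)
        (-(besselI ((k : ℝ) / 2) τ / besselI ((k : ℝ) / 2 - 1) τ) * vmfConst k τ) τ ∧
      -(besselI ((k : ℝ) / 2) τ / besselI ((k : ℝ) / 2 - 1) τ) * vmfConst k τ < 0) ∧
    StrictAntiOn (vmfConst k) (Ioi (0 : ℝ)) := by
  have hq : -1 < (k : ℝ) / 2 - 1 := by
    have : (1 : ℝ) ≤ k := by exact_mod_cast hk
    linarith
  set q : ℝ := (k : ℝ) / 2 - 1
  have hk2 : (k : ℝ) / 2 = q + 1 := by ring
  have hvmf : vmfConst k = fun τ ↦ τ ^ q / besselI q τ / (2 * π) ^ (q + 1) := by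
    ext τ
    rw [vmfConst, ← hk2, mul_comm, div_div]
  have hderiv (τ : ℝ) (hτ : 0 < τ) : HasDerivAt (vmfConst k)
      (-(besselI ((k : ℝ) / 2) τ / besselI q τ) * vmfConst k τ) τ := by
    simpa only [hvmf, hk2, mul_div_assoc]
      using (hasDerivAt_rpow_div_besselI hq hτ).div_const ((2 * π) ^ (q + 1))
  have hneg (τ : ℝ) (hτ : 0 < τ) :
      -(besselI ((k : ℝ) / 2) τ / besselI q τ) * vmfConst k τ < 0 := by
    have := besselI_pos hq hτ
    have := besselI_pos (hq.trans (lt_add_one q)) hτ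
    rw [hvmf, hk2]
    exact mul_neg_of_neg_of_pos (neg_neg_of_pos (by positivity)) (by positivity)
  refine ⟨fun τ hτ ↦ ⟨hderiv τ hτ, hneg τ hτ⟩, strictAntiOn_of_deriv_neg (convex_Ioi 0)
    (fun τ hτ ↦ (hderiv τ hτ).continuousAt.continuousWithinAt) ?_⟩
  rw [interior_Ioi]
  exact fun τ hτ ↦ (hderiv τ hτ).deriv ▸ hneg τ hτ
end

section
/- With the Fisher information matrix J_{θ₀} of the multinomial model (as above) and the empirical distribution P_Y of n i.i.d. samples, the statistic ‖J_{θ₀}^{1/2} √n (P_Y − P_{θ₀})‖² (restricted to the first k = m−1 coordinates) equals n · χ²(P_Y ‖ P_{θ₀}) = n · Σ_{i=1}^{m} (p_Y^{(i)} − p_{θ₀}^{(i)})² / p_{θ₀}^{(i)}, i.e. it equals Pearson's chi-squared statistic. -/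
open Real Matrix

/-!
`J` is a diagonal matrix plus a constant matrix, so its quadratic form is
`vᵀ J v = ∑ᵢ vᵢ² / pᵢ + (∑ᵢ vᵢ)² / pₘ`. Because `P_Y` and `P_{θ₀}` both sum to one, the
first `k` coordinates of `√n (P_Y − P_{θ₀})` sum to `√n (pₘ − qₘ)`, so the rank-one part
contributes exactly the missing `m`-th term of Pearson's statistic.
-/

theorem norm_sq_toLp_mulVec {ι : Type*} [Fintype ι] (S : Matrix ι ι ℝ) (v : ι → ℝ) :
    ‖(WithLp.equiv 2 (ι → ℝ)).symm (S *ᵥ v)‖ ^ 2 = v ⬝ᵥ (Sᵀ * S) *ᵥ v := by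
  rw [EuclideanSpace.real_norm_sq_eq, ← mulVec_mulVec, dotProduct_mulVec, vecMul_transpose]
  simp [dotProduct, sq]

theorem dotProduct_mulVec_diagonal_add_const {ι R : Type*} [Fintype ι] [DecidableEq ι]
    [CommRing R] (a : ι → R) (c : R) (v : ι → R) :
    v ⬝ᵥ (diagonal a + of fun _ _ => c) *ᵥ v = ∑ i, a i * v i ^ 2 + c * (∑ i, v i) ^ 2 := by
  have hconst : (of fun _ _ => c : Matrix ι ι R) *ᵥ v = fun _ => c * ∑ i, v i := by
    ext; simp [mulVec, dotProduct, Finset.mul_sum]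
  rw [add_mulVec, dotProduct_add, hconst]
  simp only [dotProduct, mulVec_diagonal, sq, ← Finset.sum_mul]
  congr 1
  · exact Finset.sum_congr rfl fun i _ => by ring
  · ring

theorem Fin.sum_castSucc_sub_eq_of_sum_eq {M : Type*} [AddCommGroup M] {k : ℕ}
    {p q : Fin (k + 1) → M} (h : ∑ y, q y = ∑ y, p y) :
    ∑ i : Fin k, (q i.castSucc - p i.castSucc) = p (Fin.last k) - q (Fin.last k) := by
  rw [Fin.sum_univ_castSucc, Fin.sum_univ_castSucc] at h
  rw [Finset.sum_sub_distrib, sub_eq_sub_iff_add_eq_add, h, add_comm]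

theorem pearson_chi_square_statistic_general
    (k n : ℕ) (p q : Fin (k + 1) → ℝ)
    (hps : ∑ y, p y = 1) (hqs : ∑ y, q y = 1)
    (J : Matrix (Fin k) (Fin k) ℝ)
    (hJ : ∀ i j, J i j =
      if i = j then 1 / p i.castSucc + 1 / p (Fin.last k) else 1 / p (Fin.last k))
    (S : Matrix (Fin k) (Fin k) ℝ) (hS : Sᵀ * S = J)
    (v : Fin k → ℝ)
    (hv : v = fun i => Real.sqrt n * (q i.castSucc - p i.castSucc)) :
    ‖(WithLp.equiv 2 (Fin k → ℝ)).symm (S.mulVec v)‖ ^ 2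
      = n * ∑ y : Fin (k + 1), (q y - p y) ^ 2 / p y := by
  have hJ_diagonal_add_const : J = diagonal (fun i => 1 / p i.castSucc) + of fun _ _ => 1 / p (Fin.last k) := by
    ext i j
    rw [hJ, Matrix.add_apply, diagonal_apply, of_apply]
    split_ifs with h <;> simp [h]
  have hsum : ∑ i, v i = √n * (p (Fin.last k) - q (Fin.last k)) := by
    rw [hv, ← Finset.mul_sum, Fin.sum_castSucc_sub_eq_of_sum_eq (hqs.trans hps.symm)]
  have hn : √(n : ℝ) ^ 2 = n := sq_sqrt n.cast_nonneg
  rw [norm_sq_toLp_mulVec, hS, hJ_diagonal_add_const, dotProduct_mulVec_diagonal_add_const, hsum,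
    Fin.sum_univ_castSucc, hv]
  simp only [mul_pow, hn]
  rw [mul_add, Finset.mul_sum]
  congr 1
  · exact Finset.sum_congr rfl fun i _ => by ring
  · ring

/-- With the multinomial Fisher information matrix `J` at `P_{θ₀}` and any
square root `S` of `J` (`Sᵀ S = J`), the statistic `‖S √n (P_Y − P_{θ₀})‖²` (on the first `k`
coordinates) equals Pearson's chi-squared statistic `n · ∑ᵢ (p_Y^{(i)} − p_{θ₀}^{(i)})² / p_{θ₀}^{(i)}`. -/
theorem pearson_chi_square_statistic
    (k n : ℕ) (p q : Fin (k + 1) → ℝ)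
    (hp : ∀ y, 0 < p y) (hps : ∑ y, p y = 1) (hqs : ∑ y, q y = 1)
    (J : Matrix (Fin k) (Fin k) ℝ)
    (hJ : ∀ i j, J i j =
      if i = j then 1 / p i.castSucc + 1 / p (Fin.last k) else 1 / p (Fin.last k))
    (S : Matrix (Fin k) (Fin k) ℝ) (hS : Sᵀ * S = J)
    (v : Fin k → ℝ)
    (hv : v = fun i => Real.sqrt n * (q i.castSucc - p i.castSucc)) :
    ‖(WithLp.equiv 2 (Fin k → ℝ)).symm (S.mulVec v)‖ ^ 2
      = n * ∑ y : Fin (k + 1), (q y - p y) ^ 2 / p y :=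
  pearson_chi_square_statistic_general k n p q hps hqs J hJ S hS v hv
end
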